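/- For all real numbers Ω, A, B, C, D, the vorticity function ω(θ,φ) = Ω·cosθ + A·Y_{2,0} + B·Y_{2,1} + C·Y_{2,−1} + D·Y_{2,2} satisfies ∫_{S²} ω³ dS = (10A³ + 15√3·(B − C)(B + C)·D + 15A·(B² + C² − 2D²) + 56A·Ω²·π) / (14√(5π)). -/

import Mathlib

/-!
Shifting `φ ↦ φ + π` fixes `cos θ`, `sin² θ cos 2φ` and `Y_{2,0}` but flips the sign of the
two `sin 2θ` modes, so averaging `ω³` over that shift leaves an integrand that is even in the
`sin θ cos θ` part of `ω`. After `sin² θ = 1 - cos² θ` it is a polynomial in `cos θ` times `sin θ`,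
and the `θ`-integral becomes a polynomial integral over `[-1, 1]`. What remains in `φ` is a
polynomial in `cos 2φ` plus `sin 2φ` times a polynomial in `cos 2φ`; the latter integrates to zero
by the same substitution, the former by the moments of `cos` over a period.
-/

open Real

/-- The vorticity `Ω cosθ + A Y_{2,0} + B Y_{2,1} + C Y_{2,−1} + D Y_{2,2}`
in spherical coordinates. -/
noncomputable def vort (Ω A B C D θ φ : ℝ) : ℝ :=
  Ω * Real.cos θ +
  A * (Real.sqrt (5 / (16 * π)) * (3 * (Real.cos θ) ^ 2 - 1)) +
  B * (Real.sqrt (15 / (16 * π)) * Real.sin (2 * θ) * Real.cos φ) +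
  C * (Real.sqrt (15 / (16 * π)) * Real.sin (2 * θ) * Real.sin φ) +
  D * (Real.sqrt (15 / (16 * π)) * (Real.sin θ) ^ 2 * Real.cos (2 * φ))

open intervalIntegral

theorem integral_eq_integral_add_comp_add {E : Type*} [NormedAddCommGroup E] [NormedSpace ℝ E]
    {f : ℝ → E} (hf : Continuous f) (a T : ℝ) :
    ∫ x in a..a + 2 * T, f x = ∫ x in a..a + T, (f x + f (x + T)) := by
  have hfT : Continuous fun x => f (x + T) := by fun_prop
  rw [integral_add (hf.intervalIntegrable _ _) (hfT.intervalIntegrable _ _),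
    integral_comp_add_right, two_mul, ← add_assoc,
    integral_add_adjacent_intervals (hf.intervalIntegrable _ _) (hf.intervalIntegrable _ _)]

theorem integral_comp_cos_mul_sin {g : ℝ → ℝ} (hg : Continuous g) (a b : ℝ) :
    ∫ θ in a..b, g (cos θ) * sin θ = ∫ t in cos b..cos a, g t := by
  have h := integral_comp_mul_deriv (a := a) (b := b) (f := cos) (f' := fun θ => -sin θ)
    (fun θ _ => hasDerivAt_cos θ) (by fun_prop) hg
  simp only [Function.comp_apply, mul_neg, integral_neg] at h
  rw [integral_symm (cos a) (cos b), ← h, neg_neg]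

/-- Half of `∫₀^π ((F + u sin θ cos θ)³ + (F - u sin θ cos θ)³) sin θ dθ` for
`F = p cos² θ + q cos θ + r`, as a polynomial in `p, q, r` and `U = u²`. -/
noncomputable def cubeMomentEven (p q r U : ℝ) : ℝ :=
  2 / 7 * p ^ 3 + 6 / 5 * p ^ 2 * r + 2 * p * r ^ 2 + 2 * r ^ 3 + 6 / 5 * p * q ^ 2
    + 2 * q ^ 2 * r + 12 / 35 * p * U + 4 / 5 * r * U

theorem integral_cube_add_cube_mul_sin (p q r u : ℝ) :
    ∫ θ in (0 : ℝ)..π, ((p * cos θ ^ 2 + q * cos θ + r + u * sin θ * cos θ) ^ 3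
      + (p * cos θ ^ 2 + q * cos θ + r - u * sin θ * cos θ) ^ 3) * sin θ
      = 2 * cubeMomentEven p q r (u ^ 2) := by
  set g : ℝ → ℝ := fun t =>
    2 * (p * t ^ 2 + q * t + r) ^ 3 + 6 * (p * t ^ 2 + q * t + r) * u ^ 2 * (1 - t ^ 2) * t ^ 2
    with hg
  have h : ∀ θ, ((p * cos θ ^ 2 + q * cos θ + r + u * sin θ * cos θ) ^ 3
      + (p * cos θ ^ 2 + q * cos θ + r - u * sin θ * cos θ) ^ 3) * sin θ = g (cos θ) * sin θ := by
    intro θ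
    linear_combination 6 * (p * cos θ ^ 2 + q * cos θ + r) * u ^ 2 * cos θ ^ 2 * sin θ
      * sin_sq_add_cos_sq θ
  rw [integral_congr fun θ _ => h θ, integral_comp_cos_mul_sin (by fun_prop), cos_pi, cos_zero, hg]
  ring_nf
  simp (disch := exact (Continuous.intervalIntegrable (by fun_prop) _ _)) only [integral_add,
    integral_sub, integral_const_mul, integral_mul_const, integral_pow, integral_const, integral_id]
  norm_num [cubeMomentEven]
  ring

theorem integral_cubeMomentEven (a d q u₀ u₁ u₂ : ℝ) :
    ∫ ψ in (0 : ℝ)..2 * π,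
      cubeMomentEven (3 * a - d * cos ψ) q (d * cos ψ - a) (u₀ + u₁ * cos ψ + u₂ * sin ψ)
      = 16 * π / 35 * (4 * a ^ 3 - 4 * a * d ^ 2 + 7 * a * q ^ 2 + a * u₀ + d * u₁) := by
  set g : ℝ → ℝ := fun t => u₂ * (8 * a + 16 * d * t) / 35 with hg
  have h : ∀ ψ, cubeMomentEven (3 * a - d * cos ψ) q (d * cos ψ - a) (u₀ + u₁ * cos ψ + u₂ * sin ψ)
      = cubeMomentEven (3 * a - d * cos ψ) q (d * cos ψ - a) (u₀ + u₁ * cos ψ)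
        + g (cos ψ) * sin ψ := by
    intro ψ
    simp only [cubeMomentEven, hg]
    ring
  rw [integral_congr fun ψ _ => h ψ, integral_add (Continuous.intervalIntegrable (by
    simp only [cubeMomentEven]; fun_prop) _ _) (Continuous.intervalIntegrable (by fun_prop) _ _),
    integral_comp_cos_mul_sin (by fun_prop), cos_two_pi, cos_zero, integral_same, add_zero]
  simp only [cubeMomentEven]
  ring_nf
  simp (disch := exact (Continuous.intervalIntegrable (by fun_prop) _ _)) only [integral_add,
    integral_const_mul, integral_mul_const, integral_const, integral_cos, integral_cos_sq,
    integral_cos_pow_three]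
  simp only [mul_comm π 2, sin_two_pi, cos_two_pi, sin_zero, cos_zero]
  ring

theorem integral_cubeMomentEven_two_mul (a d q u₀ u₁ u₂ : ℝ) :
    ∫ φ in (0 : ℝ)..π, cubeMomentEven (3 * a - d * cos (2 * φ)) q (d * cos (2 * φ) - a)
      (u₀ + u₁ * cos (2 * φ) + u₂ * sin (2 * φ))
      = 8 * π / 35 * (4 * a ^ 3 - 4 * a * d ^ 2 + 7 * a * q ^ 2 + a * u₀ + d * u₁) := by
  have h := mul_integral_comp_mul_left (a := 0) (b := π) (f := fun ψ =>
    cubeMomentEven (3 * a - d * cos ψ) q (d * cos ψ - a) (u₀ + u₁ * cos ψ + u₂ * sin ψ)) 2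
  rw [mul_zero, integral_cubeMomentEven] at h
  linarith

noncomputable def unnormalizedVort (Ω a b c d θ φ : ℝ) : ℝ :=
  Ω * cos θ + a * (3 * cos θ ^ 2 - 1) + b * sin (2 * θ) * cos φ + c * sin (2 * θ) * sin φ
    + d * sin θ ^ 2 * cos (2 * φ)

section unnormalizedVort

variable (Ω a b c d : ℝ)

theorem unnormalizedVort_eq (θ φ : ℝ) :
    unnormalizedVort Ω a b c d θ φ = (3 * a - d * cos (2 * φ)) * cos θ ^ 2 + Ω * cos θ
      + (d * cos (2 * φ) - a) + 2 * (b * cos φ + c * sin φ) * sin θ * cos θ := by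
  simp only [unnormalizedVort, sin_two_mul, sin_sq]
  ring

theorem unnormalizedVort_add_pi (θ φ : ℝ) :
    unnormalizedVort Ω a b c d θ (φ + π) = (3 * a - d * cos (2 * φ)) * cos θ ^ 2 + Ω * cos θ
      + (d * cos (2 * φ) - a) - 2 * (b * cos φ + c * sin φ) * sin θ * cos θ := by
  rw [unnormalizedVort_eq, mul_add, cos_add_two_pi, cos_add_pi, sin_add_pi]
  ring

theorem integral_unnormalizedVort_cube_add_pi (φ : ℝ) :
    (∫ θ in (0 : ℝ)..π, unnormalizedVort Ω a b c d θ φ ^ 3 * sin θ)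
      + ∫ θ in (0 : ℝ)..π, unnormalizedVort Ω a b c d θ (φ + π) ^ 3 * sin θ
      = 2 * cubeMomentEven (3 * a - d * cos (2 * φ)) Ω (d * cos (2 * φ) - a)
        (2 * (b ^ 2 + c ^ 2) + 2 * (b ^ 2 - c ^ 2) * cos (2 * φ) + 4 * b * c * sin (2 * φ)) := by
  rw [← integral_add (Continuous.intervalIntegrable (by unfold unnormalizedVort; fun_prop) _ _)
    (Continuous.intervalIntegrable (by unfold unnormalizedVort; fun_prop) _ _)]
  simp_rw [← add_mul, unnormalizedVort_add_pi, unnormalizedVort_eq]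
  rw [integral_cube_add_cube_mul_sin]
  congr 2
  simp only [cos_two_mul, sin_two_mul]
  linear_combination 4 * c ^ 2 * sin_sq_add_cos_sq φ

theorem integral_integral_unnormalizedVort_cube :
    ∫ φ in (0 : ℝ)..2 * π, ∫ θ in (0 : ℝ)..π, unnormalizedVort Ω a b c d θ φ ^ 3 * sin θ
      = 16 * π / 35 * (4 * a ^ 3 - 4 * a * d ^ 2 + 7 * a * Ω ^ 2 + 2 * a * (b ^ 2 + c ^ 2)
        + 2 * d * (b ^ 2 - c ^ 2)) := by
  have hcont : Continuous fun φ => ∫ θ in (0 : ℝ)..π, unnormalizedVort Ω a b c d θ φ ^ 3 * sin θ :=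
    continuous_parametric_intervalIntegral_of_continuous' (by unfold unnormalizedVort; fun_prop) 0 π
  rw [← zero_add (2 * π), integral_eq_integral_add_comp_add hcont, zero_add,
    integral_congr fun φ _ => integral_unnormalizedVort_cube_add_pi Ω a b c d φ, integral_const_mul,
    integral_cubeMomentEven_two_mul]
  ring

end unnormalizedVort

theorem sqrt_fifteen_div_eq : √(15 / (16 * π)) = √3 * √(5 / (16 * π)) := by
  rw [← sqrt_mul (by norm_num)]
  ring_nf

theorem sqrt_five_mul_pi_eq : √(5 * π) = 4 * π * √(5 / (16 * π)) := by
  rw [← sqrt_sq (by positivity : 0 ≤ 4 * π), ← sqrt_mul (by positivity)]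
  congr 1
  field_simp
  ring

/-- **The cubic Casimir `C₃` of `Ω cosθ + A Y_{2,0} + B Y_{2,1} + C Y_{2,−1} + D Y_{2,2}`.** -/
theorem stmt11 (Ω A B C D : ℝ) :
    (∫ φ in (0:ℝ)..(2 * π), ∫ θ in (0:ℝ)..π,
      (vort Ω A B C D θ φ) ^ 3 * Real.sin θ) =
    (10 * A ^ 3 + 15 * Real.sqrt 3 * (B - C) * (B + C) * D +
      15 * A * (B ^ 2 + C ^ 2 - 2 * D ^ 2) + 56 * A * Ω ^ 2 * π) /
    (14 * Real.sqrt (5 * π)) := by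
  have hvort : vort Ω A B C D = unnormalizedVort Ω (A * √(5 / (16 * π)))
      (B * √(15 / (16 * π))) (C * √(15 / (16 * π))) (D * √(15 / (16 * π))) := by
    ext θ φ
    unfold vort unnormalizedVort
    ring
  have hκ : 16 * π * √(5 / (16 * π)) ^ 2 = 5 := by
    rw [sq_sqrt (by positivity)]
    field_simp
  have h3 : √3 ^ 2 = 3 := sq_sqrt (by norm_num)
  rw [hvort, integral_integral_unnormalizedVort_cube, sqrt_fifteen_div_eq, sqrt_five_mul_pi_eq,
    eq_div_iff (by positivity)]
  set κ := √(5 / (16 * π))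
  -- With `w = 16 π κ²` the left side is `w² X / 10 + 56 π A Ω² w / 5`, where `X` is the cubic
  -- below; put `w = 5`, then `√3 ^ 2 = 3`.
  linear_combination ((16 * π * κ ^ 2 + 5) / 10 * (4 * A ^ 3 - 4 * A * D ^ 2 * √3 ^ 2
      + 2 * A * √3 ^ 2 * (B ^ 2 + C ^ 2) + 2 * D * √3 ^ 3 * (B ^ 2 - C ^ 2))
      + 56 / 5 * π * A * Ω ^ 2) * hκ
    + 5 / 2 * (2 * A * (B ^ 2 + C ^ 2) - 4 * A * D ^ 2 + 2 * D * √3 * (B ^ 2 - C ^ 2)) * h3
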